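/- Let (X, ℬ, μ) be a probability space, T : X → X a measure-preserving transformation, and f ∈ L¹(μ). Then Ā = limsup_{k→∞} A_k f is finite a.e., integrable, and satisfies ∫ Ā dμ ≤ ∫ f dμ. -/

import Mathlib

/-!
Garsia's proof of the maximal ergodic theorem shows that an integrable `φ` has nonnegative
integral over the set where some Birkhoff sum `S_k φ` is positive. Applied to `φ = 1_A (f - h)`
for a `T`-invariant set `A` and a `T`-invariant function `h`, it gives `∫_A h ≤ ∫_A f` as soon
as every `x ∈ A` has some `k` with `k h(x) < S_k f(x)`; dually for the reverse inequalities.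

The upper limit `Ā` of the Birkhoff averages is `T`-invariant. Constant `h` shows that
`{Ā = ⊤}` and `{Ā = ⊥}` are null. On the invariant sets `{|Ā| ≤ M}`, taking `h = Ā ∓ ε` gives
`∫ Ā = ∫ f` there, and, separately on `{Ā ≥ 0}` and `{Ā < 0}`, `∫ |Ā| ≤ ∫ |f|`.
Letting `M → ∞` yields integrability of `Ā` and `∫ Ā ≤ ∫ f`.
-/

open MeasureTheory Filter Set

theorem EReal.le_of_forall_coe_lt_imp_coe_le {x y : EReal}
    (h : ∀ a b : ℝ, a < b → (b : EReal) < x → (a : EReal) ≤ y) : x ≤ y := by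
  by_contra! hyx
  obtain ⟨b, hyb, hbx⟩ := EReal.exists_between_coe_real hyx
  obtain ⟨a, hya, hab⟩ := EReal.exists_between_coe_real hyb
  exact (h a b (EReal.coe_lt_coe_iff.1 hab) hbx).not_gt hya

theorem EReal.coe_toReal_sub_lt {x : EReal} (hx : x ≠ ⊥) {ε : ℝ} (hε : 0 < ε) :
    ((x.toReal - ε : ℝ) : EReal) < x := by
  induction x using EReal.rec with
  | bot => exact absurd rfl hx
  | coe t => exact EReal.coe_lt_coe_iff.2 (by simpa using hε)
  | top => exact EReal.coe_lt_top _

theorem EReal.lt_coe_toReal_add {x : EReal} (hx : x ≠ ⊤) {ε : ℝ} (hε : 0 < ε) :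
    x < ((x.toReal + ε : ℝ) : EReal) := by
  induction x using EReal.rec with
  | bot => exact EReal.bot_lt_coe _
  | coe t => exact EReal.coe_lt_coe_iff.2 (by simpa using hε)
  | top => exact absurd rfl hx

theorem EReal.abs_toReal_le_of_mem_Icc {x : EReal} {M : ℝ} (hx : x ∈ Icc (-(M : EReal)) M) :
    x ≠ ⊥ ∧ x ≠ ⊤ ∧ |x.toReal| ≤ M := by
  induction x using EReal.rec with
  | bot => simp at hx
  | coe t =>
    simp only [mem_Icc, ← EReal.coe_neg, EReal.coe_le_coe_iff] at hx
    exact ⟨EReal.coe_ne_bot t, EReal.coe_ne_top t, abs_le.2 hx⟩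
  | top => simp at hx

theorem le_of_forall_pos_le_add_mul {a b c : ℝ} (h : ∀ ε > 0, a ≤ b + ε * c) : a ≤ b := by
  refine le_of_forall_pos_le_add fun ε hε => ?_
  have hc : ε / (|c| + 1) * c ≤ ε := by
    calc ε / (|c| + 1) * c ≤ ε / (|c| + 1) * (|c| + 1) := by gcongr; linarith [le_abs_self c]
      _ = ε := div_mul_cancel₀ ε (by positivity)
  linarith [h (ε / (|c| + 1)) (by positivity)]

section BirkhoffSum

variable {X : Type*} {T : X → X} {f : X → ℝ} {x : X} {a b : ℝ}

theorem lt_birkhoffAverage_iff {k : ℕ} (hk : 0 < k) :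
    a < birkhoffAverage ℝ T f k x ↔ k * a < birkhoffSum T f k x := by
  rw [birkhoffAverage, smul_eq_mul, lt_inv_mul_iff₀ (by exact_mod_cast hk)]

theorem birkhoffAverage_lt_iff {k : ℕ} (hk : 0 < k) :
    birkhoffAverage ℝ T f k x < a ↔ birkhoffSum T f k x < k * a := by
  rw [birkhoffAverage, smul_eq_mul, inv_mul_lt_iff₀ (by exact_mod_cast hk)]

theorem eventually_le_natCast_mul (c : ℝ) {d : ℝ} (hd : 0 < d) :
    ∀ᶠ k : ℕ in atTop, c ≤ k * d :=
  (tendsto_natCast_atTop_atTop.atTop_mul_const hd).eventually_ge_atTop c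

-- The slack `b - a` absorbs the term `f x` in `S_{k+1} f x = f x + S_k f (T x)`.
theorem frequently_mul_lt_birkhoffSum_apply (hab : a < b)
    (h : ∃ᶠ k in atTop, k * b < birkhoffSum T f k x) :
    ∃ᶠ k in atTop, k * a < birkhoffSum T f k (T x) := by
  rw [← map_add_atTop_eq_nat 1, frequently_map] at h
  refine (h.and_eventually (eventually_le_natCast_mul (f x - b) (sub_pos.2 hab))).mono ?_
  rintro k ⟨hk, hslack⟩
  rw [birkhoffSum_succ'] at hk
  push_cast at hk
  linarith

theorem frequently_mul_lt_birkhoffSum_of_apply (hab : a < b)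
    (h : ∃ᶠ k in atTop, k * b < birkhoffSum T f k (T x)) :
    ∃ᶠ k in atTop, k * a < birkhoffSum T f k x := by
  rw [← map_add_atTop_eq_nat 1, frequently_map]
  refine (h.and_eventually (eventually_le_natCast_mul (a - f x) (sub_pos.2 hab))).mono ?_
  rintro k ⟨hk, hslack⟩
  rw [birkhoffSum_succ']
  push_cast
  linarith

end BirkhoffSum

section BirkhoffLimsup

variable {X : Type*} {T : X → X} {f : X → ℝ} {x : X} {a : ℝ}

noncomputable def birkhoffLimsup (T : X → X) (f : X → ℝ) (x : X) : EReal :=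
  limsup (fun k => ((birkhoffAverage ℝ T f k x : ℝ) : EReal)) atTop

theorem frequently_mul_lt_birkhoffSum_of_lt_birkhoffLimsup
    (h : (a : EReal) < birkhoffLimsup T f x) :
    ∃ᶠ k in atTop, k * a < birkhoffSum T f k x := by
  refine ((frequently_lt_of_lt_limsup (by isBoundedDefault) h).and_eventually
    (eventually_gt_atTop 0)).mono ?_
  rintro k ⟨hk, hk0⟩
  exact (lt_birkhoffAverage_iff hk0).1 (EReal.coe_lt_coe_iff.1 hk)

theorem le_birkhoffLimsup_of_frequently (h : ∃ᶠ k in atTop, k * a < birkhoffSum T f k x) :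
    (a : EReal) ≤ birkhoffLimsup T f x := by
  refine le_limsup_of_frequently_le ((h.and_eventually (eventually_gt_atTop 0)).mono ?_)
    (by isBoundedDefault)
  rintro k ⟨hk, hk0⟩
  exact EReal.coe_le_coe_iff.2 ((lt_birkhoffAverage_iff hk0).2 hk).le

theorem eventually_birkhoffSum_lt_mul_of_birkhoffLimsup_lt (h : birkhoffLimsup T f x < a) :
    ∀ᶠ k in atTop, birkhoffSum T f k x < k * a := by
  filter_upwards [eventually_lt_of_limsup_lt h (by isBoundedDefault), eventually_gt_atTop 0]
    with k hk hk0
  exact (birkhoffAverage_lt_iff hk0).1 (EReal.coe_lt_coe_iff.1 hk)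

theorem birkhoffLimsup_comp (T : X → X) (f : X → ℝ) :
    birkhoffLimsup T f ∘ T = birkhoffLimsup T f := by
  ext x
  apply le_antisymm <;> refine EReal.le_of_forall_coe_lt_imp_coe_le fun a b hab hb =>
    le_birkhoffLimsup_of_frequently ?_
  · exact frequently_mul_lt_birkhoffSum_of_apply hab
      (frequently_mul_lt_birkhoffSum_of_lt_birkhoffLimsup hb)
  · exact frequently_mul_lt_birkhoffSum_apply hab
      (frequently_mul_lt_birkhoffSum_of_lt_birkhoffLimsup hb)

theorem preimage_birkhoffLimsup_preimage (T : X → X) (f : X → ℝ) (s : Set EReal) :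
    T ⁻¹' (birkhoffLimsup T f ⁻¹' s) = birkhoffLimsup T f ⁻¹' s := by
  rw [← preimage_comp, birkhoffLimsup_comp]

variable [MeasurableSpace X]

theorem Measurable.birkhoffSum (hf : Measurable f) (hT : Measurable T) (k : ℕ) :
    Measurable (birkhoffSum T f k) :=
  Finset.measurable_sum _ fun i _ => hf.comp (hT.iterate i)

theorem Measurable.birkhoffAverage (hf : Measurable f) (hT : Measurable T) (k : ℕ) :
    Measurable (birkhoffAverage ℝ T f k) :=
  (hf.birkhoffSum hT k).const_smul ((k : ℝ)⁻¹)

theorem Measurable.birkhoffLimsup (hf : Measurable f) (hT : Measurable T) :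
    Measurable (birkhoffLimsup T f) :=
  Measurable.limsup fun k => measurable_coe_real_ereal.comp (hf.birkhoffAverage hT k)

theorem birkhoffLimsup_ae_eq_of_ae_eq {μ : Measure X} {g : X → ℝ}
    (hT : Measure.QuasiMeasurePreserving T μ μ) (hfg : f =ᵐ[μ] g) :
    birkhoffLimsup T f =ᵐ[μ] birkhoffLimsup T g := by
  filter_upwards [ae_all_iff.2 fun k => hT.birkhoffAverage_ae_eq_of_ae_eq ℝ hfg k] with x hx
  simp only [birkhoffLimsup, hx]

end BirkhoffLimsup

section MaximalErgodic

variable {X : Type*} {T : X → X} {φ : X → ℝ} {n : ℕ}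

noncomputable def birkhoffMax (T : X → X) (φ : X → ℝ) (n : ℕ) : X → ℝ :=
  (Finset.range (n + 1)).sup' Finset.nonempty_range_add_one (birkhoffSum T φ)

theorem birkhoffMax_apply (x : X) : birkhoffMax T φ n x =
    (Finset.range (n + 1)).sup' Finset.nonempty_range_add_one fun k => birkhoffSum T φ k x :=
  Finset.sup'_apply _ _ x

theorem birkhoffSum_le_birkhoffMax {k : ℕ} (hk : k ≤ n) (x : X) :
    birkhoffSum T φ k x ≤ birkhoffMax T φ n x := by
  rw [birkhoffMax_apply]
  exact Finset.le_sup' (fun k => birkhoffSum T φ k x) (Finset.mem_range_succ_iff.2 hk)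

theorem exists_birkhoffSum_eq_birkhoffMax (n : ℕ) (x : X) :
    ∃ k ≤ n, birkhoffSum T φ k x = birkhoffMax T φ n x := by
  obtain ⟨k, hk, hmax⟩ := Finset.exists_mem_eq_sup' Finset.nonempty_range_add_one
    fun k => birkhoffSum T φ k x
  exact ⟨k, Finset.mem_range_succ_iff.1 hk, by rw [birkhoffMax_apply, hmax]⟩

theorem birkhoffMax_nonneg (x : X) : 0 ≤ birkhoffMax T φ n x := by
  simpa using birkhoffSum_le_birkhoffMax (T := T) (φ := φ) n.zero_le x

theorem birkhoffMax_mono (T : X → X) (φ : X → ℝ) : Monotone (birkhoffMax T φ) :=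
  fun _ _ hnm x => (exists_birkhoffSum_eq_birkhoffMax _ x).elim fun _ ⟨hk, hmax⟩ =>
    hmax ▸ birkhoffSum_le_birkhoffMax (hk.trans hnm) x

theorem birkhoffMax_le_add_birkhoffMax_apply {x : X} (hx : 0 < birkhoffMax T φ n x) :
    birkhoffMax T φ n x ≤ φ x + birkhoffMax T φ n (T x) := by
  obtain ⟨k, hk, hmax⟩ := exists_birkhoffSum_eq_birkhoffMax (T := T) (φ := φ) n x
  rw [← hmax] at hx ⊢
  cases k with
  | zero => simp at hx
  | succ j =>
    rw [birkhoffSum_succ']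
    gcongr
    exact birkhoffSum_le_birkhoffMax (by omega) _

variable [MeasurableSpace X] {μ : Measure X}

theorem MeasureTheory.MeasurePreserving.integrable_birkhoffSum (hT : MeasurePreserving T μ μ)
    (hφ : Integrable φ μ) (k : ℕ) : Integrable (birkhoffSum T φ k) μ :=
  integrable_finsetSum _ fun i _ => (hT.iterate i).integrable_comp_of_integrable hφ

theorem Measurable.birkhoffMax (hφ : Measurable φ) (hT : Measurable T) (n : ℕ) :
    Measurable (birkhoffMax T φ n) :=
  Finset.measurable_sup' _ fun k _ => hφ.birkhoffSum hT k

theorem MeasureTheory.MeasurePreserving.integrable_birkhoffMax (hT : MeasurePreserving T μ μ)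
    (hφ : Integrable φ μ) (n : ℕ) : Integrable (birkhoffMax T φ n) μ :=
  Finset.sup'_induction (p := (Integrable · μ)) _ _ (fun _ hf _ hg => hf.sup hg)
    fun k _ => hT.integrable_birkhoffSum hφ k

theorem MeasureTheory.MeasurePreserving.setIntegral_birkhoffMax_pos_nonneg
    (hT : MeasurePreserving T μ μ) (hφm : Measurable φ) (hφ : Integrable φ μ) (n : ℕ) :
    0 ≤ ∫ x in {x | 0 < birkhoffMax T φ n x}, φ x ∂μ := by
  set M := birkhoffMax T φ n
  have hMm : Measurable M := hφm.birkhoffMax hT.measurable n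
  have hM : Integrable M μ := hT.integrable_birkhoffMax hφ n
  have hMT : Integrable (M ∘ T) μ := hT.integrable_comp_of_integrable hM
  have hE : MeasurableSet {x | 0 < M x} := measurableSet_lt measurable_const hMm
  have hcomp : ∫ x, M (T x) ∂μ = ∫ x, M x ∂μ := by
    rw [← integral_map hT.aemeasurable hMm.aestronglyMeasurable, hT.map_eq]
  calc 0 = ∫ x, M x ∂μ - ∫ x, M (T x) ∂μ := by rw [hcomp, sub_self]
    _ ≤ ∫ x in {x | 0 < M x}, M x ∂μ - ∫ x in {x | 0 < M x}, M (T x) ∂μ := by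
      rw [setIntegral_eq_integral_of_forall_compl_eq_zero (s := {x | 0 < M x}) (f := M) fun x hx =>
        le_antisymm (not_lt.1 hx) (birkhoffMax_nonneg x)]
      exact sub_le_sub_left
        (setIntegral_le_integral hMT (ae_of_all _ fun x => birkhoffMax_nonneg (T x))) _
    _ = ∫ x in {x | 0 < M x}, (M x - M (T x)) ∂μ :=
      (integral_sub hM.integrableOn hMT.integrableOn).symm
    _ ≤ ∫ x in {x | 0 < M x}, φ x ∂μ :=
      setIntegral_mono_on (hM.sub hMT).integrableOn hφ.integrableOn hE fun x hx => by
        linarith [birkhoffMax_le_add_birkhoffMax_apply hx]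

theorem MeasureTheory.MeasurePreserving.setIntegral_exists_birkhoffSum_pos_nonneg
    (hT : MeasurePreserving T μ μ) (hφm : Measurable φ) (hφ : Integrable φ μ) :
    0 ≤ ∫ x in {x | ∃ k, 0 < birkhoffSum T φ k x}, φ x ∂μ := by
  have hunion : ⋃ n, {x | 0 < birkhoffMax T φ n x} = {x | ∃ k, 0 < birkhoffSum T φ k x} := by
    ext x
    simp only [mem_iUnion]
    constructor
    · rintro ⟨n, hn⟩
      obtain ⟨k, -, hk⟩ := exists_birkhoffSum_eq_birkhoffMax n x
      exact ⟨k, hk ▸ hn⟩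
    · rintro ⟨k, hk⟩
      exact ⟨k, hk.trans_le (birkhoffSum_le_birkhoffMax le_rfl x)⟩
  have hlim := tendsto_setIntegral_of_monotone
    (fun n => measurableSet_lt measurable_const (hφm.birkhoffMax hT.measurable n))
    (fun _ _ hnm _ hx => hx.trans_le (birkhoffMax_mono T φ hnm _))
    (by rw [hunion]; exact hφ.integrableOn)
  rw [hunion] at hlim
  exact ge_of_tendsto' hlim fun n => hT.setIntegral_birkhoffMax_pos_nonneg hφm hφ n

end MaximalErgodic

section InvariantSet

variable {X : Type*} {T : X → X} {A : Set X} {x : X}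

theorem birkhoffSum_indicator_of_mem (hA : T ⁻¹' A = A) (hx : x ∈ A) (g : X → ℝ) (k : ℕ) :
    birkhoffSum T (A.indicator g) k x = birkhoffSum T g k x := by
  have hmaps : MapsTo T A A := fun y hy => by rwa [← hA] at hy
  exact Finset.sum_congr rfl fun i _ => indicator_of_mem (hmaps.iterate i hx) g

theorem birkhoffSum_indicator_of_notMem (hA : T ⁻¹' A = A) (hx : x ∉ A) (g : X → ℝ) (k : ℕ) :
    birkhoffSum T (A.indicator g) k x = 0 := by
  have hmaps : MapsTo T Aᶜ Aᶜ := fun y hy => by rwa [← hA] at hy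
  exact Finset.sum_eq_zero fun i _ => indicator_of_notMem (hmaps.iterate i hx) g

variable [MeasurableSpace X] {μ : Measure X} {f h : X → ℝ}

theorem MeasureTheory.MeasurePreserving.setIntegral_le_of_forall_mul_lt_birkhoffSum
    (hT : MeasurePreserving T μ μ) (hfm : Measurable f) (hf : Integrable f μ)
    (hAm : MeasurableSet A) (hA : T ⁻¹' A = A) (hhm : Measurable h) (hh : IntegrableOn h A μ)
    (hhT : h ∘ T = h) (hlt : ∀ x ∈ A, ∃ k : ℕ, k * h x < birkhoffSum T f k x) :
    ∫ x in A, h x ∂μ ≤ ∫ x in A, f x ∂μ := by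
  -- By invariance of `A` and `h`, `S_k (1_A (f - h)) = 1_A (S_k f - k h)`.
  have hpos : {x | ∃ k, 0 < birkhoffSum T (A.indicator (f - h)) k x} = A := by
    ext x
    by_cases hx : x ∈ A
    · simp only [birkhoffSum_indicator_of_mem hA hx, birkhoffSum_sub, birkhoffSum_of_comp_eq hhT,
        Pi.smul_apply, nsmul_eq_mul, sub_pos, mem_ofPred_eq]
      exact iff_of_true (hlt x hx) hx
    · simp [birkhoffSum_indicator_of_notMem hA hx, hx]
  have hmax := hT.setIntegral_exists_birkhoffSum_pos_nonneg ((hfm.sub hhm).indicator hAm)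
    ((hf.integrableOn.sub hh).integrable_indicator hAm)
  rw [hpos, setIntegral_indicator hAm, inter_self] at hmax
  simp only [Pi.sub_apply] at hmax
  rw [integral_sub hf.integrableOn hh] at hmax
  linarith

theorem MeasureTheory.MeasurePreserving.setIntegral_le_of_forall_birkhoffSum_lt_mul
    (hT : MeasurePreserving T μ μ) (hfm : Measurable f) (hf : Integrable f μ)
    (hAm : MeasurableSet A) (hA : T ⁻¹' A = A) (hhm : Measurable h) (hh : IntegrableOn h A μ)
    (hhT : h ∘ T = h) (hgt : ∀ x ∈ A, ∃ k : ℕ, birkhoffSum T f k x < k * h x) :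
    ∫ x in A, f x ∂μ ≤ ∫ x in A, h x ∂μ := by
  have := hT.setIntegral_le_of_forall_mul_lt_birkhoffSum hfm.neg hf.neg hAm hA hhm.neg hh.neg
    (congrArg (Neg.neg ∘ ·) hhT) fun x hx => (hgt x hx).imp fun k hk => by
      rw [birkhoffSum_neg]; simpa using hk
  simpa [integral_neg] using this

theorem MeasureTheory.MeasurePreserving.measure_eq_zero_of_forall_mul_lt_birkhoffSum
    [IsFiniteMeasure μ] (hT : MeasurePreserving T μ μ) (hfm : Measurable f) (hf : Integrable f μ)
    (hAm : MeasurableSet A) (hA : T ⁻¹' A = A)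
    (hlt : ∀ a : ℝ, ∀ x ∈ A, ∃ k : ℕ, k * a < birkhoffSum T f k x) : μ A = 0 := by
  have hbound (a : ℝ) : a * μ.real A ≤ ∫ x, |f x| ∂μ :=
    calc a * μ.real A = ∫ x in A, a ∂μ := by rw [setIntegral_const, smul_eq_mul, mul_comm]
      _ ≤ ∫ x in A, f x ∂μ := hT.setIntegral_le_of_forall_mul_lt_birkhoffSum hfm hf hAm hA
          measurable_const (integrableOn_const (measure_ne_top μ A)) rfl (hlt a)
      _ ≤ ∫ x in A, |f x| ∂μ :=
          setIntegral_mono_on hf.integrableOn hf.abs.integrableOn hAm fun x _ => le_abs_self _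
      _ ≤ ∫ x, |f x| ∂μ := setIntegral_le_integral hf.abs (ae_of_all _ fun x => abs_nonneg _)
  by_contra hA0
  have hpos : 0 < μ.real A := ENNReal.toReal_pos hA0 (measure_ne_top μ A)
  have := hbound ((∫ x, |f x| ∂μ + 1) / μ.real A)
  rw [div_mul_cancel₀ _ hpos.ne'] at this
  linarith

end InvariantSet

section BirkhoffLimsupIntegrable

variable {X : Type*} [MeasurableSpace X] {μ : Measure X} [IsFiniteMeasure μ] {T : X → X}
  {f : X → ℝ} {A : Set X}

theorem integrableOn_birkhoffLimsup_toReal_preimage_Icc (hT : Measurable T)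
    (hfm : Measurable f) (M : ℝ) :
    IntegrableOn (fun x => (birkhoffLimsup T f x).toReal)
      (birkhoffLimsup T f ⁻¹' Icc (-(M : EReal)) M) μ :=
  Measure.integrableOn_of_bounded (measure_ne_top μ _)
    (hfm.birkhoffLimsup hT).ereal_toReal.aestronglyMeasurable
    (ae_restrict_of_forall_mem (hfm.birkhoffLimsup hT measurableSet_Icc) fun _ hx =>
      (EReal.abs_toReal_le_of_mem_Icc hx).2.2)

namespace MeasureTheory.MeasurePreserving

theorem ae_birkhoffLimsup_ne_top (hT : MeasurePreserving T μ μ) (hfm : Measurable f)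
    (hf : Integrable f μ) : ∀ᵐ x ∂μ, birkhoffLimsup T f x ≠ ⊤ := by
  refine (measure_eq_zero_iff_ae_notMem (s := birkhoffLimsup T f ⁻¹' {⊤})).1 ?_
  refine hT.measure_eq_zero_of_forall_mul_lt_birkhoffSum hfm hf
    (hfm.birkhoffLimsup hT.measurable (measurableSet_singleton ⊤))
    (preimage_birkhoffLimsup_preimage T f _) fun a x hx => ?_
  have hlt : (a : EReal) < birkhoffLimsup T f x := by
    rw [show birkhoffLimsup T f x = ⊤ from hx]
    exact EReal.coe_lt_top a
  exact (frequently_mul_lt_birkhoffSum_of_lt_birkhoffLimsup hlt).exists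

theorem ae_birkhoffLimsup_ne_bot (hT : MeasurePreserving T μ μ) (hfm : Measurable f)
    (hf : Integrable f μ) : ∀ᵐ x ∂μ, birkhoffLimsup T f x ≠ ⊥ := by
  refine (measure_eq_zero_iff_ae_notMem (s := birkhoffLimsup T f ⁻¹' {⊥})).1 ?_
  refine hT.measure_eq_zero_of_forall_mul_lt_birkhoffSum hfm.neg hf.neg
    (hfm.birkhoffLimsup hT.measurable (measurableSet_singleton ⊥))
    (preimage_birkhoffLimsup_preimage T f _) fun a x hx => ?_
  have hlt : birkhoffLimsup T f x < ((-a : ℝ) : EReal) := by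
    rw [show birkhoffLimsup T f x = ⊥ from hx]
    exact EReal.bot_lt_coe _
  obtain ⟨k, hk⟩ := (eventually_birkhoffSum_lt_mul_of_birkhoffLimsup_lt hlt).exists
  exact ⟨k, by rw [birkhoffSum_neg]; linarith⟩

theorem setIntegral_birkhoffLimsup_le (hT : MeasurePreserving T μ μ) (hfm : Measurable f)
    (hf : Integrable f μ) (hAm : MeasurableSet A) (hA : T ⁻¹' A = A)
    (hbot : ∀ x ∈ A, birkhoffLimsup T f x ≠ ⊥)
    (hGA : IntegrableOn (fun x => (birkhoffLimsup T f x).toReal) A μ) :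
    ∫ x in A, (birkhoffLimsup T f x).toReal ∂μ ≤ ∫ x in A, f x ∂μ := by
  refine le_of_forall_pos_le_add_mul (c := μ.real A) fun ε hε => ?_
  have hconst : IntegrableOn (fun _ => ε) A μ := integrableOn_const (measure_ne_top μ A)
  have hkey := hT.setIntegral_le_of_forall_mul_lt_birkhoffSum hfm hf hAm hA
    ((hfm.birkhoffLimsup hT.measurable).ereal_toReal.sub_const ε) (hGA.sub hconst)
    (congrArg ((fun t : EReal => t.toReal - ε) ∘ ·) (birkhoffLimsup_comp T f))
    fun x hx => (frequently_mul_lt_birkhoffSum_of_lt_birkhoffLimsup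
      (EReal.coe_toReal_sub_lt (hbot x hx) hε)).exists
  rw [integral_sub hGA hconst, setIntegral_const, smul_eq_mul] at hkey
  linarith

theorem le_setIntegral_birkhoffLimsup (hT : MeasurePreserving T μ μ) (hfm : Measurable f)
    (hf : Integrable f μ) (hAm : MeasurableSet A) (hA : T ⁻¹' A = A)
    (htop : ∀ x ∈ A, birkhoffLimsup T f x ≠ ⊤)
    (hGA : IntegrableOn (fun x => (birkhoffLimsup T f x).toReal) A μ) :
    ∫ x in A, f x ∂μ ≤ ∫ x in A, (birkhoffLimsup T f x).toReal ∂μ := by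
  refine le_of_forall_pos_le_add_mul (c := μ.real A) fun ε hε => ?_
  have hconst : IntegrableOn (fun _ => ε) A μ := integrableOn_const (measure_ne_top μ A)
  have hkey := hT.setIntegral_le_of_forall_birkhoffSum_lt_mul hfm hf hAm hA
    ((hfm.birkhoffLimsup hT.measurable).ereal_toReal.add_const ε) (hGA.add hconst)
    (congrArg ((fun t : EReal => t.toReal + ε) ∘ ·) (birkhoffLimsup_comp T f))
    fun x hx => (eventually_birkhoffSum_lt_mul_of_birkhoffLimsup_lt
      (EReal.lt_coe_toReal_add (htop x hx) hε)).exists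
  rw [integral_add hGA hconst, setIntegral_const, smul_eq_mul] at hkey
  linarith

theorem setIntegral_abs_birkhoffLimsup_le (hT : MeasurePreserving T μ μ) (hfm : Measurable f)
    (hf : Integrable f μ) (hAm : MeasurableSet A) (hA : T ⁻¹' A = A)
    (hfin : ∀ x ∈ A, birkhoffLimsup T f x ≠ ⊥ ∧ birkhoffLimsup T f x ≠ ⊤)
    (hGA : IntegrableOn (fun x => (birkhoffLimsup T f x).toReal) A μ) :
    ∫ x in A, |(birkhoffLimsup T f x).toReal| ∂μ ≤ ∫ x in A, |f x| ∂μ := by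
  set P := birkhoffLimsup T f ⁻¹' Ici 0
  have hPm : MeasurableSet P := hfm.birkhoffLimsup hT.measurable measurableSet_Ici
  have hP : T ⁻¹' P = P := preimage_birkhoffLimsup_preimage T f _
  have hpos : ∫ x in A ∩ P, |(birkhoffLimsup T f x).toReal| ∂μ ≤ ∫ x in A ∩ P, |f x| ∂μ :=
    calc ∫ x in A ∩ P, |(birkhoffLimsup T f x).toReal| ∂μ
        = ∫ x in A ∩ P, (birkhoffLimsup T f x).toReal ∂μ :=
          setIntegral_congr_fun (hAm.inter hPm) fun x hx =>
            abs_of_nonneg (EReal.toReal_nonneg hx.2)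
      _ ≤ ∫ x in A ∩ P, f x ∂μ :=
          hT.setIntegral_birkhoffLimsup_le hfm hf (hAm.inter hPm)
            (by rw [preimage_inter, hA, hP]) (fun x hx => (hfin x hx.1).1)
            (hGA.mono_set inter_subset_left)
      _ ≤ ∫ x in A ∩ P, |f x| ∂μ :=
          setIntegral_mono_on hf.integrableOn hf.abs.integrableOn (hAm.inter hPm)
            fun x _ => le_abs_self _
  have hneg : ∫ x in A \ P, |(birkhoffLimsup T f x).toReal| ∂μ ≤ ∫ x in A \ P, |f x| ∂μ :=
    calc ∫ x in A \ P, |(birkhoffLimsup T f x).toReal| ∂μ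
        = -∫ x in A \ P, (birkhoffLimsup T f x).toReal ∂μ := by
          rw [← integral_neg]
          exact setIntegral_congr_fun (hAm.diff hPm) fun x hx =>
            abs_of_nonpos (EReal.toReal_nonpos (not_le.1 hx.2).le)
      _ ≤ -∫ x in A \ P, f x ∂μ :=
          neg_le_neg (hT.le_setIntegral_birkhoffLimsup hfm hf (hAm.diff hPm)
            (by rw [preimage_sdiff, hA, hP]) (fun x hx => (hfin x hx.1).2)
            (hGA.mono_set sdiff_subset))
      _ = ∫ x in A \ P, -f x ∂μ := (integral_neg _).symm
      _ ≤ ∫ x in A \ P, |f x| ∂μ :=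
          setIntegral_mono_on hf.neg.integrableOn hf.abs.integrableOn (hAm.diff hPm)
            fun x _ => neg_le_abs _
  rw [← integral_inter_add_sdiff hPm (Integrable.abs hGA),
    ← integral_inter_add_sdiff hPm hf.abs.integrableOn]
  exact add_le_add hpos hneg

theorem aecover_birkhoffLimsup_preimage_Icc (hT : MeasurePreserving T μ μ) (hfm : Measurable f)
    (hf : Integrable f μ) :
    AECover μ atTop fun M : ℝ => birkhoffLimsup T f ⁻¹' Icc (-(M : EReal)) M where
  ae_eventually_mem := by
    filter_upwards [hT.ae_birkhoffLimsup_ne_top hfm hf, hT.ae_birkhoffLimsup_ne_bot hfm hf]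
      with x htop hbot
    filter_upwards [eventually_ge_atTop |(birkhoffLimsup T f x).toReal|] with M hM
    rw [mem_preimage, ← EReal.coe_toReal htop hbot, ← EReal.coe_neg, mem_Icc,
      EReal.coe_le_coe_iff, EReal.coe_le_coe_iff]
    exact abs_le.1 hM
  measurableSet _ := hfm.birkhoffLimsup hT.measurable measurableSet_Icc

theorem integrable_birkhoffLimsup_toReal (hT : MeasurePreserving T μ μ) (hfm : Measurable f)
    (hf : Integrable f μ) : Integrable (fun x => (birkhoffLimsup T f x).toReal) μ := by
  refine (hT.aecover_birkhoffLimsup_preimage_Icc hfm hf).integrable_of_integral_norm_bounded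
    (∫ x, |f x| ∂μ) (integrableOn_birkhoffLimsup_toReal_preimage_Icc hT.measurable hfm)
    (Eventually.of_forall fun M => ?_)
  calc ∫ x in birkhoffLimsup T f ⁻¹' Icc (-(M : EReal)) M, |(birkhoffLimsup T f x).toReal| ∂μ
      ≤ ∫ x in birkhoffLimsup T f ⁻¹' Icc (-(M : EReal)) M, |f x| ∂μ :=
        hT.setIntegral_abs_birkhoffLimsup_le hfm hf
          (hfm.birkhoffLimsup hT.measurable measurableSet_Icc)
          (preimage_birkhoffLimsup_preimage T f _)
          (fun _ hx => (EReal.abs_toReal_le_of_mem_Icc hx).imp_right And.left)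
          (integrableOn_birkhoffLimsup_toReal_preimage_Icc hT.measurable hfm M)
    _ ≤ ∫ x, |f x| ∂μ := setIntegral_le_integral hf.abs (ae_of_all _ fun _ => abs_nonneg _)

theorem integral_birkhoffLimsup_toReal_le (hT : MeasurePreserving T μ μ) (hfm : Measurable f)
    (hf : Integrable f μ) : ∫ x, (birkhoffLimsup T f x).toReal ∂μ ≤ ∫ x, f x ∂μ := by
  have hB := hT.aecover_birkhoffLimsup_preimage_Icc hfm hf
  refine le_of_tendsto_of_tendsto'
    (hB.integral_tendsto_of_countably_generated (hT.integrable_birkhoffLimsup_toReal hfm hf))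
    (hB.integral_tendsto_of_countably_generated hf) fun M => ?_
  exact hT.setIntegral_birkhoffLimsup_le hfm hf (hB.measurableSet M)
    (preimage_birkhoffLimsup_preimage T f _) (fun _ hx => (EReal.abs_toReal_le_of_mem_Icc hx).1)
    (integrableOn_birkhoffLimsup_toReal_preimage_Icc hT.measurable hfm M)

end MeasureTheory.MeasurePreserving

end BirkhoffLimsupIntegrable

/-- If `T` preserves the probability measure `μ` and `f ∈ L¹(μ)`, then
`Ā = limsup_{k→∞} A_k f` (computed in the extended reals) is finite a.e.,
integrable, and `∫ Ā dμ ≤ ∫ f dμ`. -/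
theorem limsup_birkhoffAverage_integrable_and_le
    {X : Type*} [MeasurableSpace X] (μ : Measure X) [IsProbabilityMeasure μ]
    (T : X → X) (hT : MeasurePreserving T μ μ)
    (f : X → ℝ) (hf : Integrable f μ) :
    (∀ᵐ x ∂μ,
        limsup (fun k => ((birkhoffAverage ℝ T f k x : ℝ) : EReal)) atTop ≠ ⊤ ∧
        limsup (fun k => ((birkhoffAverage ℝ T f k x : ℝ) : EReal)) atTop ≠ ⊥) ∧
      Integrable (fun x =>
        (limsup (fun k => ((birkhoffAverage ℝ T f k x : ℝ) : EReal)) atTop).toReal) μ ∧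
      ∫ x, (limsup (fun k => ((birkhoffAverage ℝ T f k x : ℝ) : EReal)) atTop).toReal ∂μ
        ≤ ∫ x, f x ∂μ := by
  obtain ⟨g, hgm, hfg⟩ := hf.aemeasurable
  have hg : Integrable g μ := hf.congr hfg
  have hG : birkhoffLimsup T f =ᵐ[μ] birkhoffLimsup T g :=
    birkhoffLimsup_ae_eq_of_ae_eq hT.quasiMeasurePreserving hfg
  refine ⟨?_, ?_, ?_⟩
  · filter_upwards [hG, hT.ae_birkhoffLimsup_ne_top hgm hg, hT.ae_birkhoffLimsup_ne_bot hgm hg]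
      with x hx htop hbot
    change birkhoffLimsup T f x ≠ ⊤ ∧ birkhoffLimsup T f x ≠ ⊥
    rw [hx]
    exact ⟨htop, hbot⟩
  · exact (hT.integrable_birkhoffLimsup_toReal hgm hg).congr (hG.fun_comp EReal.toReal).symm
  · calc ∫ x, (birkhoffLimsup T f x).toReal ∂μ = ∫ x, (birkhoffLimsup T g x).toReal ∂μ :=
          integral_congr_ae (hG.fun_comp EReal.toReal)
      _ ≤ ∫ x, g x ∂μ := hT.integral_birkhoffLimsup_toReal_le hgm hg
      _ = ∫ x, f x ∂μ := integral_congr_ae hfg.symm
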